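/- Theorem A.2 (lower bound on the mutual information between the original feature and the recovered feature). Let A, B, X, Z be random variables and write I for Shannon (conditional) mutual information, regarded as real numbers. Assume the following instances of the standard information identities: (i) I(X;(A,B);Z) = I(X;Z) − I(X;Z|A,B); (ii) I(X;(A,B);Z) = I(X;A,B) − I(X;A,B|Z); (iii) I(X;A,B|Z) = I(X;A|Z) + I(X;B|Z,A); (iv) I(X;B|Z,A) = I(X;B|A) − I(X;B;Z|A); (v) I(X;B;Z|A) = I(X;Z|A) − I(X;Z|A,B); the positivity fact I(X;Z|A) ≥ 0; the hypothesis (H1) that Z is a deterministic aggregation of A, i.e. I(X;Z|A,B) = 0; and the conclusion of Theorem A.1, i.e. I(A;X|Z) ≤ I(A;B|Z) + I(A;X|B) (where I(X;A|Z) = I(A;X|Z)). Then I(X;Z) ≥ I(X;A,B) − I(A;B|Z) − I(A;X|B) − I(B;X|A). -/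
import Mathlib


/-- Theorem A.2: lower bound on the mutual information between the original feature `X`
and the recovered feature `Z`. All quantities are real numbers representing Shannon
(conditional) mutual informations among four random variables `A, B, X, Z`:
`IXABZ = I(X;(A,B);Z)`, `IXZ = I(X;Z)`, `IXZ_AB = I(X;Z|A,B)`, `IXAB = I(X;A,B)`,
`IXAB_Z = I(X;A,B|Z)`, `IXA_Z = I(X;A|Z) = I(A;X|Z)`, `IXB_ZA = I(X;B|Z,A)`,
`IXB_A = I(X;B|A) = I(B;X|A)`, `IXBZ_A = I(X;B;Z|A)`, `IXZ_A = I(X;Z|A)`,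
`IAB_Z = I(A;B|Z)`, `IAX_B = I(A;X|B)`. -/
theorem thmA2
    (IXABZ IXZ IXZ_AB IXAB IXAB_Z IXA_Z IXB_ZA IXB_A IXBZ_A IXZ_A IAB_Z IAX_B : ℝ)
    -- (i) I(X;(A,B);Z) = I(X;Z) − I(X;Z|A,B)
    (h1 : IXABZ = IXZ - IXZ_AB)
    -- (ii) I(X;(A,B);Z) = I(X;A,B) − I(X;A,B|Z)
    (h2 : IXABZ = IXAB - IXAB_Z)
    -- (iii) I(X;A,B|Z) = I(X;A|Z) + I(X;B|Z,A)
    (h3 : IXAB_Z = IXA_Z + IXB_ZA)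
    -- (iv) I(X;B|Z,A) = I(X;B|A) − I(X;B;Z|A)
    (h4 : IXB_ZA = IXB_A - IXBZ_A)
    -- (v) I(X;B;Z|A) = I(X;Z|A) − I(X;Z|A,B)
    (h5 : IXBZ_A = IXZ_A - IXZ_AB)
    -- positivity
    (hpos : 0 ≤ IXZ_A)
    -- (H1): Z is a deterministic aggregation of A
    (hH1 : IXZ_AB = 0)
    -- conclusion of Theorem A.1 (with I(X;A|Z) = I(A;X|Z))
    (hA1 : IXA_Z ≤ IAB_Z + IAX_B) :
    IXZ ≥ IXAB - IAB_Z - IAX_B - IXB_A := by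
  nlinarith [hA1, hpos]
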